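/- arXiv:2307.01356 — 4 statements merged into one kernel-verified Lean document; each statement's English description precedes it below -/
import Mathlib

section
/- Let $q > 2$ be real and let $\omega = \frac{\log(1/\rho)}{2(q-2)}$ for some $0 < \rho \leq 1/3$. Then for any real $y$ with $|y| < \omega$, one has $|1+y|^q \leq 1 + qy + \frac{\rho^{-1/2}}{2} q^2 y^2$. -/
/-!
For `q ≥ 2` the map `t ↦ |1 + t| ^ q` is twice differentiable on all of `ℝ` (also across
`t = -1`), with second derivative `q (q - 1) |1 + t| ^ (q - 2)`. Between `0` and `y` we have
`|1 + t| ^ (q - 2) ≤ exp (|t| (q - 2)) ≤ exp (ω (q - 2)) = ρ ^ (-1/2)`, so the second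
derivative is at most `q ^ 2 ρ ^ (-1/2)` there, and the second-order Taylor bound at `0` gives
the claim.
-/

open Real Set

theorem hasDerivAt_abs_rpow_mul_self {r : ℝ} (hr : 0 ≤ r) (s : ℝ) :
    HasDerivAt (fun x => |x| ^ r * x) ((r + 1) * |s| ^ r) s := by
  have hcont : Continuous fun x : ℝ => |x| ^ r := (continuous_rpow_const hr).comp continuous_abs
  refine hasDerivAt_of_hasDerivAt_of_ne' (x := 0) (g := fun x => (r + 1) * |x| ^ r)
    (fun x hx => ?_) (hcont.mul continuous_id).continuousAt
    (continuous_const.mul hcont).continuousAt s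
  have habs : |x| ≠ 0 := abs_ne_zero.2 hx
  refine (((hasDerivAt_abs hx).rpow_const (Or.inl habs)).mul (hasDerivAt_id x)).congr_deriv ?_
  have hsign : (SignType.sign x : ℝ) * x = |x| := sign_mul_self x
  rw [rpow_sub_one habs, id]
  field_simp
  linear_combination r * hsign

theorem ConvexOn.add_mul_sub_le_of_hasDerivAt {S : Set ℝ} {f : ℝ → ℝ} {f' x y : ℝ}
    (hfc : ConvexOn ℝ S f) (hx : x ∈ S) (hy : y ∈ S) (hf : HasDerivAt f f' x) :
    f x + f' * (y - x) ≤ f y := by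
  rcases lt_trichotomy x y with hxy | rfl | hxy
  · have := hfc.le_slope_of_hasDerivAt hx hy hxy hf
    rw [slope_def_field, le_div_iff₀ (sub_pos.2 hxy)] at this
    linarith
  · simp
  · have := hfc.slope_le_of_hasDerivAt hy hx hxy hf
    rw [slope_def_field, div_le_iff₀ (sub_pos.2 hxy)] at this
    linarith

theorem le_second_order_of_hasDerivAt2_le {f f' f'' : ℝ → ℝ} {M x y : ℝ}
    (hf : ∀ t ∈ uIcc x y, HasDerivAt f (f' t) t)
    (hf' : ∀ t ∈ uIcc x y, HasDerivAt f' (f'' t) t)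
    (hM : ∀ t ∈ uIcc x y, f'' t ≤ M) :
    f y ≤ f x + f' x * (y - x) + M / 2 * (y - x) ^ 2 := by
  -- `g` is convex with `g x = g' x = 0`, so it lies above its zero tangent line at `x`.
  set g : ℝ → ℝ := fun t => f x + f' x * (t - x) + M / 2 * (t - x) ^ 2 - f t
  have hg : ∀ t ∈ uIcc x y, HasDerivAt g (f' x + M * (t - x) - f' t) t := fun t ht => by
    refine (((((hasDerivAt_id t).sub_const x).const_mul (f' x)).const_add (f x)).add
      ((((hasDerivAt_id t).sub_const x).pow 2).const_mul (M / 2)) |>.sub (hf t ht)).congr_deriv ?_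
    simp only [id]; ring
  have hg' : ∀ t ∈ uIcc x y, HasDerivAt (fun t => f' x + M * (t - x) - f' t) (M - f'' t) t :=
    fun t ht => by
      refine (((((hasDerivAt_id t).sub_const x).const_mul M).const_add (f' x)).sub
        (hf' t ht)).congr_deriv ?_
      ring
  have hconv : ConvexOn ℝ (uIcc x y) g := by
    exact convexOn_of_hasDerivWithinAt2_nonneg (convex_uIcc x y)
      (fun t ht => (hg t ht).continuousAt.continuousWithinAt)
      (fun t ht => (hg t (interior_subset ht)).hasDerivWithinAt)
      (fun t ht => (hg' t (interior_subset ht)).hasDerivWithinAt)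
      (fun t ht => sub_nonneg.2 (hM t (interior_subset ht)))
  have := hconv.add_mul_sub_le_of_hasDerivAt left_mem_uIcc right_mem_uIcc (hg x left_mem_uIcc)
  simp only [g, sub_self] at this
  linarith

theorem abs_one_add_rpow_le_second_order {q M y : ℝ} (hq : 2 ≤ q)
    (hM : ∀ t ∈ uIcc 0 y, q * (q - 1) * |1 + t| ^ (q - 2) ≤ M) :
    |1 + y| ^ q ≤ 1 + q * y + M / 2 * y ^ 2 := by
  have key := le_second_order_of_hasDerivAt2_le (f := fun t => |1 + t| ^ q)
    (f' := fun t => q * (|1 + t| ^ (q - 2) * (1 + t)))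
    (f'' := fun t => q * ((q - 2 + 1) * |1 + t| ^ (q - 2)))
    (fun t _ => ((hasDerivAt_abs_rpow (1 + t) (by linarith)).comp_const_add 1 t).congr_deriv
      (by ring))
    (fun t _ =>
      ((hasDerivAt_abs_rpow_mul_self (by linarith) (1 + t)).comp_const_add 1 t).const_mul q)
    (fun t ht => (le_of_eq (by ring)).trans (hM t ht))
  simpa using key

theorem abs_one_add_rpow_le_exp (t : ℝ) {r : ℝ} (hr : 0 ≤ r) :
    |1 + t| ^ r ≤ exp (|t| * r) := by
  rw [exp_mul]
  refine rpow_le_rpow (abs_nonneg _) ?_ hr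
  calc |1 + t| ≤ |t| + 1 := by simpa [add_comm] using abs_add_le t 1
    _ ≤ exp |t| := add_one_le_exp _

theorem rpow_neg_one_half_eq_exp {ρ : ℝ} (hρ : 0 < ρ) :
    ρ ^ (-(1:ℝ)/2) = exp (log (1/ρ) / 2) := by
  rw [rpow_def_of_pos hρ, one_div, log_inv]
  ring_nf

theorem taylor_pointwise_bound_general (q ρ y : ℝ) (hq : 2 < q) (hρ0 : 0 < ρ)
    (hy : |y| < Real.log (1/ρ) / (2 * (q - 2))) :
    |1 + y| ^ q ≤ 1 + q * y + ρ ^ (-(1:ℝ)/2) / 2 * q ^ 2 * y ^ 2 := by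
  have hq2 : 0 < q - 2 := by linarith
  have hyω : |y| * (q - 2) ≤ log (1/ρ) / 2 := by
    rw [lt_div_iff₀ (by positivity)] at hy
    linarith
  have hbound : ∀ t ∈ uIcc 0 y, |1 + t| ^ (q - 2) ≤ ρ ^ (-(1:ℝ)/2) := fun t ht => by
    have ht : |t| ≤ |y| := by simpa using abs_sub_left_of_mem_uIcc ht
    rw [rpow_neg_one_half_eq_exp hρ0]
    refine (abs_one_add_rpow_le_exp t hq2.le).trans (exp_le_exp.2 ?_)
    exact (mul_le_mul_of_nonneg_right ht hq2.le).trans hyω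
  calc |1 + y| ^ q ≤ 1 + q * y + ρ ^ (-(1:ℝ)/2) * q ^ 2 / 2 * y ^ 2 :=
        abs_one_add_rpow_le_second_order hq.le fun t ht => ?_
    _ = 1 + q * y + ρ ^ (-(1:ℝ)/2) / 2 * q ^ 2 * y ^ 2 := by ring
  have h0 : 0 ≤ |1 + t| ^ (q - 2) := by positivity
  have := hbound t ht
  nlinarith

/-- Taylor-type pointwise inequality: for `q > 2`, `0 < ρ ≤ 1/3`, and
`ω = log(1/ρ) / (2(q-2))`, every real `y` with `|y| < ω` satisfies
`|1+y|^q ≤ 1 + q y + (ρ^{-1/2}/2) q² y²`. -/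
theorem taylor_pointwise_bound (q ρ y : ℝ) (hq : 2 < q) (hρ0 : 0 < ρ) (hρ : ρ ≤ 1/3)
    (hy : |y| < Real.log (1/ρ) / (2 * (q - 2))) :
    |1 + y| ^ q ≤ 1 + q * y + ρ ^ (-(1:ℝ)/2) / 2 * q ^ 2 * y ^ 2 :=
  taylor_pointwise_bound_general q ρ y hq hρ0 hy
end

section
/- Let $q \geq 2$ be real, let $Z$ be a standard normal Gaussian random variable, and let $d \in \mathbb{R}$. Then $\mathbb{E}[|1 + dZ|^q] \geq 1 + \frac{1}{9} q^2 d^2$. -/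
open MeasureTheory ProbabilityTheory
open scoped NNReal

/-! With `n = ⌊q⌋₊ ≥ 2`, Bernoulli's inequality `(x ^ n) ^ (q / n) ≥ 1 + (q / n) (x ^ n - 1)` shows
`E|X|^q ≥ E|X|^n` whenever `E|X|^n ≥ 1`. For `X = 1 + dZ`, the symmetry `Z ↦ -Z` of the Gaussian
lets us average `(1 + dZ)^n` with `(1 - dZ)^n`; in the binomial expansion of the average only even
powers of `dZ` survive, all nonnegative, so `E|1 + dZ|^n ≥ 1 + C(n, 2) d² E[Z²] = 1 + C(n, 2) d²`.
Finally `C(⌊q⌋₊, 2) ≥ q² / 9`. -/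

lemma two_add_two_mul_choose_two_mul_sq_le_one_add_pow_add_one_sub_pow {n : ℕ} (hn : 2 ≤ n)
    (x : ℝ) : 2 + 2 * n.choose 2 * x ^ 2 ≤ (1 + x) ^ n + (1 - x) ^ n := by
  have hexpand : (1 + x) ^ n + (1 - x) ^ n
      = ∑ k ∈ Finset.range (n + 1), (n.choose k : ℝ) * (x ^ k + (-x) ^ k) := by
    rw [sub_eq_add_neg, add_comm 1 x, add_comm 1 (-x), add_pow, add_pow, ← Finset.sum_add_distrib]
    exact Finset.sum_congr rfl fun k _ => by ring
  have hterm_nonneg (k : ℕ) : 0 ≤ x ^ k + (-x) ^ k := by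
    rcases Nat.even_or_odd k with hk | hk
    · rw [hk.neg_pow]
      exact add_nonneg (hk.pow_nonneg x) (hk.pow_nonneg x)
    · rw [hk.neg_pow, add_neg_cancel]
  calc 2 + 2 * n.choose 2 * x ^ 2
      = ∑ k ∈ {0, 2}, (n.choose k : ℝ) * (x ^ k + (-x) ^ k) := by
        rw [Finset.sum_pair (by norm_num), Nat.choose_zero_right]; ring
    _ ≤ ∑ k ∈ Finset.range (n + 1), (n.choose k : ℝ) * (x ^ k + (-x) ^ k) := by
      refine Finset.sum_le_sum_of_subset_of_nonneg ?_ fun k _ _ =>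
        mul_nonneg (n.choose k).cast_nonneg (hterm_nonneg k)
      exact Finset.insert_subset_iff.2 ⟨Finset.mem_range.2 (by omega),
        Finset.singleton_subset_iff.2 (Finset.mem_range.2 (by omega))⟩
    _ = (1 + x) ^ n + (1 - x) ^ n := hexpand.symm

lemma integral_comp_neg_gaussianReal {E : Type*} [NormedAddCommGroup E] [NormedSpace ℝ E]
    (v : ℝ≥0) (f : ℝ → E) : ∫ x, f (-x) ∂gaussianReal 0 v = ∫ x, f x ∂gaussianReal 0 v := by
  have hmap : (gaussianReal 0 v).map Neg.neg = gaussianReal 0 v := by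
    simpa using gaussianReal_map_neg (μ := 0) (v := v)
  rw [← measurableEmbedding_neg.integral_map, hmap]

lemma integral_sq_gaussianReal_zero (v : ℝ≥0) : ∫ x, x ^ 2 ∂gaussianReal 0 v = v := by
  rw [← variance_of_integral_eq_zero aemeasurable_id' integral_id_gaussianReal,
    variance_fun_id_gaussianReal]

lemma integrable_abs_add_mul_rpow {μ : ℝ} {v : ℝ≥0} (a b : ℝ) {r : ℝ} (hr : 0 ≤ r) :
    Integrable (fun z => |a + b * z| ^ r) (gaussianReal μ v) := by
  have hmem : MemLp (fun z => a + b * z) r.toNNReal (gaussianReal μ v) :=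
    (memLp_const a).add ((memLp_id_gaussianReal _).const_mul b)
  simpa [Real.coe_toNNReal _ hr] using hmem.integrable_norm_rpow'

lemma one_add_choose_two_mul_sq_le_integral_abs_one_add_mul_pow {n : ℕ} (hn : 2 ≤ n) (d : ℝ) :
    1 + n.choose 2 * d ^ 2 ≤ ∫ z, |1 + d * z| ^ n ∂gaussianReal 0 1 := by
  have hint (b : ℝ) : Integrable (fun z => |1 + b * z| ^ n) (gaussianReal 0 1) := by
    simpa using integrable_abs_add_mul_rpow 1 b n.cast_nonneg
  have hsymm :
      ∫ z, |1 + -d * z| ^ n ∂gaussianReal 0 1 = ∫ z, |1 + d * z| ^ n ∂gaussianReal 0 1 := by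
    simpa using integral_comp_neg_gaussianReal 1 fun z => |1 + d * z| ^ n
  have hpointwise (z : ℝ) :
      2 + 2 * n.choose 2 * d ^ 2 * z ^ 2 ≤ |1 + d * z| ^ n + |1 + -d * z| ^ n := by
    have habs (x : ℝ) : (1 + x) ^ n ≤ |1 + x| ^ n := (le_abs_self _).trans (abs_pow _ _).le
    calc 2 + 2 * n.choose 2 * d ^ 2 * z ^ 2 = 2 + 2 * n.choose 2 * (d * z) ^ 2 := by ring
      _ ≤ (1 + d * z) ^ n + (1 + -d * z) ^ n := by
        simpa [neg_mul, ← sub_eq_add_neg] using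
          two_add_two_mul_choose_two_mul_sq_le_one_add_pow_add_one_sub_pow hn (d * z)
      _ ≤ |1 + d * z| ^ n + |1 + -d * z| ^ n := add_le_add (habs _) (habs _)
  have hsq : Integrable (fun z : ℝ => z ^ 2) (gaussianReal 0 1) := by
    simpa using integrable_abs_add_mul_rpow (μ := 0) (v := 1) 0 1 zero_le_two
  suffices 2 * (1 + n.choose 2 * d ^ 2) ≤ 2 * ∫ z, |1 + d * z| ^ n ∂gaussianReal 0 1 by linarith
  calc 2 * (1 + n.choose 2 * d ^ 2)
      = ∫ z, (2 + 2 * n.choose 2 * d ^ 2 * z ^ 2) ∂gaussianReal 0 1 := by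
        rw [integral_add (integrable_const _) (hsq.const_mul _), integral_const_mul,
          integral_sq_gaussianReal_zero]
        simp only [integral_const, probReal_univ, smul_eq_mul, NNReal.coe_one]
        ring
    _ ≤ ∫ z, (|1 + d * z| ^ n + |1 + -d * z| ^ n) ∂gaussianReal 0 1 :=
        integral_mono ((integrable_const _).add (hsq.const_mul _)) ((hint d).add (hint (-d)))
          hpointwise
    _ = 2 * ∫ z, |1 + d * z| ^ n ∂gaussianReal 0 1 := by
        rw [integral_add (hint d) (hint (-d)), hsymm]; ring

lemma integral_rpow_le_integral_rpow_of_one_le {Ω : Type*} [MeasurableSpace Ω] {μ : Measure Ω}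
    [IsProbabilityMeasure μ] {f : Ω → ℝ} (hf : 0 ≤ f) {p q : ℝ} (hp : 0 < p) (hpq : p ≤ q)
    (hfp : Integrable (fun ω => f ω ^ p) μ) (hfq : Integrable (fun ω => f ω ^ q) μ)
    (hone : 1 ≤ ∫ ω, f ω ^ p ∂μ) : ∫ ω, f ω ^ p ∂μ ≤ ∫ ω, f ω ^ q ∂μ := by
  have hqp : 1 ≤ q / p := (one_le_div hp).2 hpq
  have hbernoulli (ω : Ω) : 1 + q / p * (f ω ^ p - 1) ≤ f ω ^ q := by
    have h := one_add_mul_self_le_rpow_one_add (s := f ω ^ p - 1)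
      (by linarith [Real.rpow_nonneg (hf ω) p]) hqp
    rwa [add_sub_cancel, ← Real.rpow_mul (hf ω), mul_div_cancel₀ _ hp.ne'] at h
  have hint_affine : Integrable (fun ω => q / p * (f ω ^ p - 1)) μ :=
    (hfp.sub (integrable_const 1)).const_mul _
  have hintegral_affine :
      ∫ ω, (1 + q / p * (f ω ^ p - 1)) ∂μ = 1 + q / p * (∫ ω, f ω ^ p ∂μ - 1) := by
    rw [integral_add (integrable_const _) hint_affine, integral_const_mul,
      integral_sub hfp (integrable_const _)]
    simp
  calc ∫ ω, f ω ^ p ∂μ ≤ 1 + q / p * (∫ ω, f ω ^ p ∂μ - 1) := by nlinarith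
    _ ≤ ∫ ω, f ω ^ q ∂μ :=
        hintegral_affine ▸ integral_mono ((integrable_const _).add hint_affine) hfq hbernoulli

lemma sq_div_nine_le_choose_floor_two {q : ℝ} (hq : 2 ≤ q) : q ^ 2 / 9 ≤ (⌊q⌋₊.choose 2 : ℝ) := by
  have hn2 : (2 : ℝ) ≤ ⌊q⌋₊ := by exact_mod_cast Nat.le_floor (by exact_mod_cast hq)
  have hn1 : q - 1 < ⌊q⌋₊ := Nat.sub_one_lt_floor q
  rw [Nat.cast_choose_two]
  nlinarith

/-- For real `q ≥ 2`, a standard Gaussian `Z`, and any `d ∈ ℝ`: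
`E[|1 + d Z|^q] ≥ 1 + q² d² / 9`. -/
theorem gaussian_q_moment_lower_bound (q d : ℝ) (hq : 2 ≤ q) :
    1 + 1/9 * q ^ 2 * d ^ 2 ≤ ∫ z, |1 + d * z| ^ q ∂(ProbabilityTheory.gaussianReal 0 1) := by
  set n := ⌊q⌋₊
  have hn : 2 ≤ n := Nat.le_floor (by exact_mod_cast hq)
  have hmoment : 1 + n.choose 2 * d ^ 2 ≤ ∫ z, |1 + d * z| ^ (n : ℝ) ∂gaussianReal 0 1 := by
    simpa using one_add_choose_two_mul_sq_le_integral_abs_one_add_mul_pow hn d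
  calc 1 + 1/9 * q ^ 2 * d ^ 2 ≤ 1 + n.choose 2 * d ^ 2 := by
        have := sq_div_nine_le_choose_floor_two hq
        gcongr
        linarith
    _ ≤ ∫ z, |1 + d * z| ^ (n : ℝ) ∂gaussianReal 0 1 := hmoment
    _ ≤ ∫ z, |1 + d * z| ^ q ∂gaussianReal 0 1 :=
        integral_rpow_le_integral_rpow_of_one_le (fun _ => abs_nonneg _) (by positivity)
          (Nat.floor_le (by linarith)) (integrable_abs_add_mul_rpow 1 d n.cast_nonneg)
          (integrable_abs_add_mul_rpow 1 d (by linarith))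
          ((le_add_of_nonneg_right (by positivity)).trans hmoment)
end

section
/- Let $p \leq 1/2$ and let $g, h : (\{0,1\}^n, \mu_p) \to \{0,1\}$ be indicators of cross-intersecting families (i.e., every set in the family of $h$ intersects every set in the family of $g$). Then $\mu_p(h)\mu_p(g) \leq \sum_{d=1}^n \left(\frac{p}{1-p}\right)^d |\langle h^{=d}, g \rangle|$, where the inner product and Efron-Stein/Fourier components $h^{=d}$ are taken with respect to $\mu_p$. -/
open Finset

/-- The `p`-biased product measure on the hypercube `{0,1}^n`. -/
noncomputable def mup (p : ℝ) {n : ℕ} (x : Fin n → Bool) : ℝ :=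
  ∏ i, if x i then p else 1 - p

/-- Expectation with respect to the `p`-biased measure. -/
noncomputable def expp (p : ℝ) {n : ℕ} (f : (Fin n → Bool) → ℝ) : ℝ :=
  ∑ x, mup p x * f x

/-- The `p`-biased character `χ_S(x) = ∏_{i ∈ S} (x_i - p)/√(p(1-p))`. -/
noncomputable def chi (p : ℝ) {n : ℕ} (S : Finset (Fin n)) (x : Fin n → Bool) : ℝ :=
  ∏ i ∈ S, ((if x i then 1 else 0) - p) / Real.sqrt (p * (1 - p))

/-- The `p`-biased Fourier coefficient `f̂(S) = E_{μ_p}[f χ_S]`. -/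
noncomputable def fhat (p : ℝ) {n : ℕ} (f : (Fin n → Bool) → ℝ)
    (S : Finset (Fin n)) : ℝ :=
  expp p (fun x => f x * chi p S x)

noncomputable def chi1 (p : ℝ) (b : Bool) : ℝ :=
  ((if b then 1 else 0) - p) / Real.sqrt (p * (1 - p))

lemma chi_eq_prod (p : ℝ) {n : ℕ} (S : Finset (Fin n)) (x : Fin n → Bool) :
    chi p S x = ∏ i ∈ S, chi1 p (x i) := rfl

lemma one_add_eig (p : ℝ) (hp0 : 0 < p) (hp1 : p < 1) :
    1 + (-(p/(1-p))) * (chi1 p true * chi1 p true) = 0 := by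
  have h1 : (0:ℝ) < 1 - p := by linarith
  have hs : Real.sqrt (p*(1-p)) * Real.sqrt (p*(1-p)) = p*(1-p) :=
    Real.mul_self_sqrt (by positivity)
  have hs0 : Real.sqrt (p*(1-p)) ≠ 0 :=
    ne_of_gt (Real.sqrt_pos.mpr (by positivity))
  unfold chi1
  simp only [if_pos]
  have key : ((1:ℝ) - p)/Real.sqrt (p*(1-p)) * ((1 - p)/Real.sqrt (p*(1-p)))
      = (1-p)/p := by
    rw [div_mul_div_comm, hs]
    field_simp
  rw [key]
  field_simp
  ring

lemma sum_chi_prod (p : ℝ) {n : ℕ} (x y : Fin n → Bool) :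
    ∑ S : Finset (Fin n), (-(p/(1-p)))^S.card * (chi p S x * chi p S y)
      = ∏ i, (1 + (-(p/(1-p))) * (chi1 p (x i) * chi1 p (y i))) := by
  have := Finset.prod_add (fun i => (-(p/(1-p))) * (chi1 p (x i) * chi1 p (y i)))
    (fun _ => (1:ℝ)) (Finset.univ : Finset (Fin n))
  simp only [Finset.prod_const_one, mul_one] at this
  rw [show (fun i => 1 + (-(p/(1-p))) * (chi1 p (x i) * chi1 p (y i)))
    = (fun i => (-(p/(1-p))) * (chi1 p (x i) * chi1 p (y i)) + 1) from by funext i; ring]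
  rw [this, Finset.powerset_univ]
  apply Finset.sum_congr rfl
  intro S _
  rw [chi_eq_prod, chi_eq_prod]
  conv_rhs => rw [Finset.prod_mul_distrib, Finset.prod_const]
  rw [Finset.prod_mul_distrib]

lemma key_zero (p : ℝ) (hp0 : 0 < p) (hp1 : p < 1) {n : ℕ}
    (h g : (Fin n → Bool) → ℝ)
    (hBool : ∀ x, h x = 0 ∨ h x = 1) (gBool : ∀ x, g x = 0 ∨ g x = 1)
    (hcross : ∀ x y, h x = 1 → g y = 1 → ∃ i, x i = true ∧ y i = true) :
    ∑ S : Finset (Fin n), (-(p/(1-p)))^S.card * (fhat p h S * fhat p g S) = 0 := by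
  have hstep : ∀ S : Finset (Fin n), (-(p/(1-p)))^S.card * (fhat p h S * fhat p g S)
      = ∑ x, ∑ y, (mup p x * h x) * (mup p y * g y) *
          ((-(p/(1-p)))^S.card * (chi p S x * chi p S y)) := by
    intro S
    unfold fhat expp
    rw [Finset.sum_mul_sum, Finset.mul_sum]
    refine Finset.sum_congr rfl fun x _ => ?_
    rw [Finset.mul_sum]
    refine Finset.sum_congr rfl fun y _ => ?_
    ring
  simp_rw [hstep]
  rw [Finset.sum_comm]
  refine Finset.sum_eq_zero fun x _ => ?_
  rw [Finset.sum_comm]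
  refine Finset.sum_eq_zero fun y _ => ?_
  rw [← Finset.mul_sum, sum_chi_prod]
  rcases hBool x with hx | hx
  · simp [hx]
  rcases gBool y with hy | hy
  · simp [hy]
  obtain ⟨i, hxi, hyi⟩ := hcross x y hx hy
  have : (∏ i, (1 + (-(p/(1-p))) * (chi1 p (x i) * chi1 p (y i)))) = 0 := by
    apply Finset.prod_eq_zero (Finset.mem_univ i)
    rw [hxi, hyi, one_add_eig p hp0 hp1]
  rw [this, mul_zero]

lemma fhat_empty (p : ℝ) {n : ℕ} (f : (Fin n → Bool) → ℝ) :
    fhat p f ∅ = expp p f := by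
  simp [fhat, chi, expp]

lemma expp_sum_eq (p : ℝ) {n : ℕ} (h g : (Fin n → Bool) → ℝ) (d : ℕ) :
    expp p (fun x =>
      (∑ T ∈ univ.filter (fun T : Finset (Fin n) => T.card = d),
        fhat p h T * chi p T x) * g x)
    = ∑ T ∈ univ.filter (fun T : Finset (Fin n) => T.card = d),
        fhat p h T * fhat p g T := by
  unfold expp
  simp_rw [Finset.sum_mul, Finset.mul_sum]
  rw [Finset.sum_comm]
  refine Finset.sum_congr rfl fun T _ => ?_
  beta_reduce
  rw [show fhat p g T = ∑ x, mup p x * (g x * chi p T x) from rfl, Finset.mul_sum]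
  refine Finset.sum_congr rfl fun x _ => ?_
  ring

/-- If `h, g` are indicators of cross-intersecting families on the `p`-biased cube
with `p ≤ 1/2`, then `μ_p(h) μ_p(g) ≤ ∑_{d=1}^n (p/(1-p))^d |⟨h^{=d}, g⟩|`. -/
theorem cross_intersecting_inner_product_bound (p : ℝ) (hp0 : 0 < p) (hp : p ≤ 1/2)
    {n : ℕ} (h g : (Fin n → Bool) → ℝ)
    (hBool : ∀ x, h x = 0 ∨ h x = 1) (gBool : ∀ x, g x = 0 ∨ g x = 1)
    (hcross : ∀ x y, h x = 1 → g y = 1 → ∃ i, x i = true ∧ y i = true) :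
    expp p h * expp p g ≤
      ∑ d ∈ Finset.Icc 1 n, (p / (1 - p)) ^ d *
        |expp p (fun x =>
          (∑ T ∈ univ.filter (fun T : Finset (Fin n) => T.card = d),
            fhat p h T * chi p T x) * g x)| := by
  have hp1 : p < 1 := by linarith
  have h1p : (0:ℝ) < 1 - p := by linarith
  have hq : 0 ≤ p / (1 - p) := by positivity
  have hkey := key_zero p hp0 hp1 h g hBool gBool hcross
  -- fiberwise decomposition by cardinality
  have hfib : ∑ S : Finset (Fin n), (-(p/(1-p)))^S.card * (fhat p h S * fhat p g S)
      = ∑ d ∈ Finset.Icc 0 n, ∑ S ∈ univ.filter (fun S : Finset (Fin n) => S.card = d),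
          (-(p/(1-p)))^S.card * (fhat p h S * fhat p g S) := by
    rw [Finset.sum_fiberwise_of_maps_to]
    intro S _
    simp only [Finset.mem_Icc]
    exact ⟨Nat.zero_le _, le_trans (Finset.card_le_univ S) (by simp)⟩
  have hsplit : Finset.Icc 0 n = insert 0 (Finset.Icc 1 n) := by
    ext m; simp; omega
  have h0fiber : (univ.filter (fun S : Finset (Fin n) => S.card = 0)) = {∅} := by
    ext S; simp [Finset.card_eq_zero]
  have hmain : expp p h * expp p g
      = -∑ d ∈ Finset.Icc 1 n, (-(p/(1-p)))^d *
          ∑ S ∈ univ.filter (fun S : Finset (Fin n) => S.card = d),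
            fhat p h S * fhat p g S := by
    have := hkey
    rw [hfib, hsplit, Finset.sum_insert (by simp)] at this
    rw [h0fiber] at this
    simp only [Finset.sum_singleton, Finset.card_empty, pow_zero, one_mul,
      fhat_empty] at this
    have hcongr : ∀ d ∈ Finset.Icc 1 n,
        (∑ S ∈ univ.filter (fun S : Finset (Fin n) => S.card = d),
          (-(p/(1-p)))^S.card * (fhat p h S * fhat p g S))
        = (-(p/(1-p)))^d * ∑ S ∈ univ.filter (fun S : Finset (Fin n) => S.card = d),
            fhat p h S * fhat p g S := by
      intro d _
      rw [Finset.mul_sum]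
      refine Finset.sum_congr rfl fun S hS => ?_
      simp only [Finset.mem_filter] at hS
      rw [hS.2]
    rw [Finset.sum_congr rfl hcongr] at this
    linarith
  rw [hmain]
  have habs : ∀ d ∈ Finset.Icc 1 n,
      -( (-(p/(1-p)))^d * ∑ S ∈ univ.filter (fun S : Finset (Fin n) => S.card = d),
          fhat p h S * fhat p g S)
      ≤ (p / (1 - p)) ^ d *
        |expp p (fun x =>
          (∑ T ∈ univ.filter (fun T : Finset (Fin n) => T.card = d),
            fhat p h T * chi p T x) * g x)| := by
    intro d _
    rw [expp_sum_eq]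
    calc -( (-(p/(1-p)))^d * ∑ S ∈ univ.filter (fun S : Finset (Fin n) => S.card = d),
            fhat p h S * fhat p g S)
        ≤ |(-(p/(1-p)))^d * ∑ S ∈ univ.filter (fun S : Finset (Fin n) => S.card = d),
            fhat p h S * fhat p g S| := neg_le_abs _
      _ = (p / (1 - p)) ^ d *
            |∑ S ∈ univ.filter (fun S : Finset (Fin n) => S.card = d),
              fhat p h S * fhat p g S| := by
          rw [abs_mul, abs_pow, abs_neg, abs_of_nonneg hq]
  calc -∑ d ∈ Finset.Icc 1 n, (-(p/(1-p)))^d *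
          ∑ S ∈ univ.filter (fun S : Finset (Fin n) => S.card = d),
            fhat p h S * fhat p g S
      = ∑ d ∈ Finset.Icc 1 n, -((-(p/(1-p)))^d *
          ∑ S ∈ univ.filter (fun S : Finset (Fin n) => S.card = d),
            fhat p h S * fhat p g S) := by rw [Finset.sum_neg_distrib]
    _ ≤ _ := Finset.sum_le_sum habs
end

section
/- Let $k, n \in \mathbb{N}$, $p \in (0,1]$, and let $\mathcal{A} \subseteq [k]^n$. Embed $\mathcal{A}$ into $(\{0,1\}^k)^n$ as $\tilde{\mathcal{A}} = \{S : \exists z \in \mathcal{A},\ \forall i,\ S_i = \{z_i\}\}$ and let $\mathcal{B} = \tilde{\mathcal{A}}^\uparrow$ be its up-closure. Then $\frac{|\mathcal{A}|}{k^n} \leq \frac{\mu_p(\mathcal{B})}{(1 - (1-p)^k)^n}$. -/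
open Finset

/-- The `p`-biased product measure on `({0,1}^k)^n`. -/
noncomputable def mupB (p : ℝ) {k n : ℕ} (x : Fin n → Fin k → Bool) : ℝ :=
  ∏ i, ∏ j, if x i j then p else 1 - p

/-- The embedding `Ã` of `𝒜 ⊆ [k]^n` into `({0,1}^k)^n` by tuples of singletons. -/
def tildeEmb {k n : ℕ} (A : Finset (Fin n → Fin k)) : Set (Fin n → Fin k → Bool) :=
  {S | ∃ z ∈ A, ∀ i j, S i j = decide (j = z i)}

/-- The up-closure of a family in `({0,1}^k)^n` (coordinatewise). -/
def upClosure {k n : ℕ} (T : Set (Fin n → Fin k → Bool)) : Set (Fin n → Fin k → Bool) :=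
  {x | ∃ y ∈ T, ∀ i j, y i j = true → x i j = true}

open Classical in
/-- The `μ_p`-measure of a family in `({0,1}^k)^n`. -/
noncomputable def muSet (p : ℝ) {k n : ℕ} (B : Set (Fin n → Fin k → Bool)) : ℝ :=
  ∑ x, if x ∈ B then mupB p x else 0

/-! Couple `μ_p` with `𝒜`: draw `x ~ μ_p` and, in each nonempty block `x i`, an element `z i`
uniformly at random; the pair `(x, z)` has mass `∏ i, pickMass p (x i) (z i)`. By symmetry of the
coordinates, `z i` takes each value in `[k]` with mass `(1 - (1-p)^k) / k`, so every `z` has mass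
`((1 - (1-p)^k) / k)^n`. As `z ∈ 𝒜` forces `x ∈ ℬ`, the mass of `{z ∈ 𝒜}` is at most `μ_p(ℬ)`. -/

variable {α ι : Type*} [Fintype α] [Fintype ι]

noncomputable def blockMeasure (p : ℝ) (s : α → Bool) : ℝ :=
  ∏ j, if s j then p else 1 - p

noncomputable def pickMass (p : ℝ) (s : α → Bool) (a : α) : ℝ :=
  if s a then blockMeasure p s / #{j | s j} else 0

lemma blockMeasure_nonneg {p : ℝ} (hp0 : 0 ≤ p) (hp1 : p ≤ 1) (s : α → Bool) :
    0 ≤ blockMeasure p s :=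
  prod_nonneg fun j _ => by split <;> linarith

lemma blockMeasure_false (p : ℝ) :
    blockMeasure p (fun _ : α => false) = (1 - p) ^ Fintype.card α := by
  simp [blockMeasure]

lemma blockMeasure_comp_perm (p : ℝ) (s : α → Bool) (σ : Equiv.Perm α) :
    blockMeasure p (s ∘ σ) = blockMeasure p s :=
  Equiv.prod_comp σ fun j => if s j then p else 1 - p

lemma pickMass_nonneg {p : ℝ} (hp0 : 0 ≤ p) (hp1 : p ≤ 1) (s : α → Bool) (a : α) :
    0 ≤ pickMass p s a := by
  unfold pickMass
  split
  · exact div_nonneg (blockMeasure_nonneg hp0 hp1 s) (Nat.cast_nonneg _)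
  · exact le_rfl

lemma pickMass_comp_perm (p : ℝ) (s : α → Bool) (σ : Equiv.Perm α) (a : α) :
    pickMass p (s ∘ σ) a = pickMass p s (σ a) := by
  have hcard : #{j | s (σ j)} = #{j | s j} := card_equiv σ (by simp)
  simp only [pickMass, hcard, blockMeasure_comp_perm, Function.comp_apply]

lemma sum_pickMass_left (p : ℝ) (s : α → Bool) :
    ∑ a, pickMass p s a = if s = (fun _ => false) then 0 else blockMeasure p s := by
  have hsum : ∑ a, pickMass p s a = #{j | s j} * (blockMeasure p s / #{j | s j}) := by
    simp only [pickMass, ← sum_filter, sum_const, nsmul_eq_mul]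
  rw [hsum]
  split_ifs with hs
  · simp [hs]
  · have : #{j | s j} ≠ 0 := by
      simpa [funext_iff, filter_eq_empty_iff] using hs
    field_simp

lemma sum_pickMass_left_le {p : ℝ} (hp0 : 0 ≤ p) (hp1 : p ≤ 1) (s : α → Bool) :
    ∑ a, pickMass p s a ≤ blockMeasure p s := by
  rw [sum_pickMass_left]
  split_ifs
  exacts [blockMeasure_nonneg hp0 hp1 s, le_rfl]

lemma sum_prod_pickMass_le [DecidableEq ι] {p : ℝ} (hp0 : 0 ≤ p) (hp1 : p ≤ 1)
    (x : ι → α → Bool) :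
    ∑ z : ι → α, ∏ i, pickMass p (x i) (z i) ≤ ∏ i, blockMeasure p (x i) := by
  rw [← Fintype.prod_sum fun i a => pickMass p (x i) a]
  exact prod_le_prod (fun i _ => sum_nonneg fun a _ => pickMass_nonneg hp0 hp1 _ a)
    fun i _ => sum_pickMass_left_le hp0 hp1 (x i)

variable [DecidableEq α]

lemma sum_blockMeasure (p : ℝ) : ∑ s : α → Bool, blockMeasure p s = 1 := by
  simp [blockMeasure, ← Fintype.prod_sum fun (_ : α) (b : Bool) => if b then p else 1 - p]

lemma sum_pickMass_right (p : ℝ) (a : α) :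
    ∑ s, pickMass p s a = (1 - (1 - p) ^ Fintype.card α) / Fintype.card α := by
  have hsymm : ∀ b, ∑ s, pickMass p s b = ∑ s, pickMass p s a := fun b => by
    refine Fintype.sum_equiv ((Equiv.swap a b).arrowCongr (Equiv.refl Bool)) _ _ fun s => ?_
    show pickMass p s b = pickMass p (s ∘ (Equiv.swap a b).symm) a
    rw [pickMass_comp_perm, Equiv.symm_swap, Equiv.swap_apply_left]
  have htotal : ∑ b : α, ∑ s : α → Bool, pickMass p s b = 1 - (1 - p) ^ Fintype.card α := by
    rw [sum_comm]
    simp [sum_pickMass_left, sum_ite, filter_ne', sum_erase_eq_sub, sum_blockMeasure,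
      blockMeasure_false]
  have hcard : (Fintype.card α : ℝ) ≠ 0 := Nat.cast_ne_zero.2 (Fintype.card_pos_iff.2 ⟨a⟩).ne'
  rw [eq_div_iff hcard, ← htotal, sum_congr rfl fun b _ => hsymm b]
  simp [mul_comm]

lemma sum_prod_pickMass_eq [DecidableEq ι] (p : ℝ) (z : ι → α) :
    ∑ x : ι → α → Bool, ∏ i, pickMass p (x i) (z i) =
      ((1 - (1 - p) ^ Fintype.card α) / Fintype.card α) ^ Fintype.card ι := by
  rw [← Fintype.prod_sum fun i s => pickMass p s (z i)]
  simp [sum_pickMass_right, div_pow]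

lemma mupB_eq_prod_blockMeasure (p : ℝ) {k n : ℕ} (x : Fin n → Fin k → Bool) :
    mupB p x = ∏ i, blockMeasure p (x i) :=
  rfl

lemma mem_upClosure_tildeEmb {k n : ℕ} {A : Finset (Fin n → Fin k)} {x : Fin n → Fin k → Bool} :
    x ∈ upClosure (tildeEmb A) ↔ ∃ z ∈ A, ∀ i, x i (z i) = true := by
  constructor
  · rintro ⟨y, ⟨z, hzA, hyz⟩, hyx⟩
    exact ⟨z, hzA, fun i => hyx i (z i) (by simp [hyz])⟩
  · rintro ⟨z, hzA, hzx⟩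
    refine ⟨_, ⟨z, hzA, fun i j => rfl⟩, fun i j hj => ?_⟩
    rw [of_decide_eq_true hj]
    exact hzx i

open Classical in
lemma sum_prod_pickMass_le_indicator {p : ℝ} (hp0 : 0 ≤ p) (hp1 : p ≤ 1) {k n : ℕ}
    (A : Finset (Fin n → Fin k)) (x : Fin n → Fin k → Bool) :
    ∑ z ∈ A, ∏ i, pickMass p (x i) (z i) ≤
      if x ∈ upClosure (tildeEmb A) then mupB p x else 0 := by
  split_ifs with hx
  · calc ∑ z ∈ A, ∏ i, pickMass p (x i) (z i)
        ≤ ∑ z : Fin n → Fin k, ∏ i, pickMass p (x i) (z i) :=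
          sum_le_univ_sum_of_nonneg fun z => prod_nonneg fun i _ => pickMass_nonneg hp0 hp1 _ _
      _ ≤ mupB p x :=
          (sum_prod_pickMass_le hp0 hp1 x).trans_eq (mupB_eq_prod_blockMeasure p x).symm
  · refine (sum_eq_zero fun z hz => ?_).le
    have hzx : ¬ ∀ i, x i (z i) = true := fun h => hx (mem_upClosure_tildeEmb.2 ⟨z, hz, h⟩)
    obtain ⟨i, hi⟩ := not_forall.1 hzx
    exact prod_eq_zero (mem_univ i) (by simp [pickMass, hi])

lemma card_mul_le_muSet_upClosure {p : ℝ} (hp0 : 0 ≤ p) (hp1 : p ≤ 1) {k n : ℕ}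
    (A : Finset (Fin n → Fin k)) :
    #A * ((1 - (1 - p) ^ k) / k) ^ n ≤ muSet p (upClosure (tildeEmb A)) := by
  calc (#A : ℝ) * ((1 - (1 - p) ^ k) / k) ^ n
      = ∑ z ∈ A, ∑ x : Fin n → Fin k → Bool, ∏ i, pickMass p (x i) (z i) := by
        simp [sum_prod_pickMass_eq]
    _ = ∑ x : Fin n → Fin k → Bool, ∑ z ∈ A, ∏ i, pickMass p (x i) (z i) := sum_comm
    _ ≤ muSet p (upClosure (tildeEmb A)) :=
        sum_le_sum fun x _ => sum_prod_pickMass_le_indicator hp0 hp1 A x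

/-- Coupling lemma: `|𝒜|/k^n ≤ μ_p(ℬ) / (1 - (1-p)^k)^n` where `ℬ` is the up-closure of
the singleton embedding of `𝒜`. -/
theorem embedding_measure_bound (k n : ℕ) (p : ℝ) (hp0 : 0 < p) (hp1 : p ≤ 1)
    (A : Finset (Fin n → Fin k)) :
    (A.card : ℝ) / k ^ n ≤
      muSet p (upClosure (tildeEmb A)) / (1 - (1 - p) ^ k) ^ n := by
  have hcoupling := card_mul_le_muSet_upClosure hp0.le hp1 A
  obtain rfl | hk := k.eq_zero_or_pos
  · cases n with
    | zero => simpa using hcoupling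
    | succ n => simp -- both sides are divided by `0 ^ (n + 1) = 0`
  · have hq : 0 < 1 - (1 - p) ^ k := sub_pos.2 (pow_lt_one₀ (by linarith) (by linarith) hk.ne')
    rw [div_le_div_iff₀ (by positivity) (by positivity)]
    rwa [div_pow, ← mul_div_assoc, div_le_iff₀ (by positivity)] at hcoupling
end
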